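/- arXiv:2111.03889 — 5 statements merged into one kernel-verified Lean document; each statement's English description precedes it below -/
import Mathlib

section
/- Let (Ω, μ) be a finite measure space and let (C_k) be a sequence of measurable functions from Ω to the real d × d matrices such that C_k(x) is symmetric and positive semidefinite for μ-a.e. x and every k. Assume C_k converges to C in the L²(Ω)-norm (with respect to the Frobenius norm on matrices), where C is measurable with C(x) symmetric positive semidefinite a.e. Then there exists a subsequence (C_{k_j}) such that √(C_{k_j}) converges to √C in the L⁴(Ω)-norm, where √A denotes the unique symmetric positive semidefinite square root of a symmetric positive semidefinite matrix A. -/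
open MeasureTheory Filter Topology
open scoped ENNReal Classical

/-- The Frobenius norm of a real `d × d` matrix. -/
noncomputable def frobNorm {d : ℕ} (M : Matrix (Fin d) (Fin d) ℝ) : ℝ :=
  Real.sqrt (∑ i, ∑ j, (M i j) ^ 2)

/-- The principal (symmetric positive semidefinite) square root of a matrix, extended
by `0` to matrices that are not positive semidefinite. -/
noncomputable def psdSqrt {d : ℕ} (M : Matrix (Fin d) (Fin d) ℝ) :
    Matrix (Fin d) (Fin d) ℝ :=
  if h : M.PosSemidef then
    (h.1.eigenvectorUnitary : Matrix (Fin d) (Fin d) ℝ) *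
      Matrix.diagonal ((↑) ∘ (fun x : ℝ => Real.sqrt x) ∘ h.1.eigenvalues) *
      (star h.1.eigenvectorUnitary : Matrix (Fin d) (Fin d) ℝ)
  else 0

namespace SqrtL4Aux

open Matrix

lemma frobNorm_nonneg {d : ℕ} (M : Matrix (Fin d) (Fin d) ℝ) : 0 ≤ frobNorm M :=
  Real.sqrt_nonneg _

lemma frobNorm_sq {d : ℕ} (M : Matrix (Fin d) (Fin d) ℝ) :
    frobNorm M ^ 2 = ∑ i, ∑ j, (M i j) ^ 2 :=
  Real.sq_sqrt (Finset.sum_nonneg fun _ _ => Finset.sum_nonneg fun _ _ => sq_nonneg _)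

lemma frobNorm_neg {d : ℕ} (M : Matrix (Fin d) (Fin d) ℝ) : frobNorm (-M) = frobNorm M := by
  unfold frobNorm; congr 1; simp

lemma posSemidef_psdSqrt {d : ℕ} {A : Matrix (Fin d) (Fin d) ℝ} (hA : A.PosSemidef) :
    (psdSqrt A).PosSemidef := by
  rw [psdSqrt, dif_pos hA]
  have := (posSemidef_diagonal_iff.mpr (fun i => Real.sqrt_nonneg (hA.1.eigenvalues i))
    : (diagonal (fun i => Real.sqrt (hA.1.eigenvalues i))).PosSemidef).mul_mul_conjTranspose_same
    (hA.1.eigenvectorUnitary : Matrix (Fin d) (Fin d) ℝ)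
  simpa [Matrix.star_eq_conjTranspose, Function.comp_def] using this

lemma psdSqrt_mul_self {d : ℕ} {A : Matrix (Fin d) (Fin d) ℝ} (hA : A.PosSemidef) :
    psdSqrt A * psdSqrt A = A := by
  rw [psdSqrt, dif_pos hA]
  set U := (hA.1.eigenvectorUnitary : Matrix (Fin d) (Fin d) ℝ) with hU
  have hUU : star U * U = 1 := Unitary.coe_star_mul_self _
  conv_rhs => rw [hA.1.spectral_theorem, Unitary.conjStarAlgAut_apply]
  simp only [mul_assoc]
  rw [← mul_assoc (star U) U, hUU, one_mul, ← mul_assoc (diagonal _) (diagonal _),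
    diagonal_mul_diagonal]
  congr 3
  funext i
  simp [Real.mul_self_sqrt (hA.eigenvalues_nonneg i)]

/-- Sum of squares of entries of a symmetric matrix equals the sum of squares of
its eigenvalues. -/
lemma sum_sq_eq_sum_eig_sq {d : ℕ} {S : Matrix (Fin d) (Fin d) ℝ} (hS : S.IsHermitian) :
    ∑ i, ∑ j, S i j ^ 2 = ∑ i, hS.eigenvalues i ^ 2 := by
  have hsym : ∀ i j, S j i = S i j := fun i j => by
    conv_rhs => rw [← hS]
    simp [Matrix.conjTranspose_apply]
  have h1 : ∑ i, ∑ j, S i j ^ 2 = (S * S).trace := by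
    simp only [Matrix.trace, Matrix.diag, Matrix.mul_apply]
    rw [Finset.sum_comm]
    congr 1; ext i; congr 1; ext j
    rw [hsym i j]; ring
  rw [h1]
  set U := (hS.eigenvectorUnitary : Matrix (Fin d) (Fin d) ℝ) with hU
  have hUU : star U * U = 1 := Unitary.coe_star_mul_self _
  have h2 : S * S = U * (diagonal (RCLike.ofReal ∘ hS.eigenvalues)
      * diagonal (RCLike.ofReal ∘ hS.eigenvalues)) * star U := by
    conv_lhs => rw [hS.spectral_theorem, Unitary.conjStarAlgAut_apply]
    simp only [mul_assoc]
    rw [← mul_assoc (star U) U, hUU, one_mul]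
  rw [h2, Matrix.trace_mul_cycle, ← mul_assoc, hUU, one_mul, diagonal_mul_diagonal,
    Matrix.trace_diagonal]
  simp [sq]

/-- Cauchy–Schwarz: quadratic form bounded by Frobenius norm for unit vectors. -/
lemma quad_le_frob {d : ℕ} (M : Matrix (Fin d) (Fin d) ℝ) {v : Fin d → ℝ}
    (hv : ∑ j, v j ^ 2 = 1) : |v ⬝ᵥ (M *ᵥ v)| ≤ frobNorm M := by
  have h1 : v ⬝ᵥ (M *ᵥ v) = ∑ p : Fin d × Fin d, (M p.1 p.2) * (v p.1 * v p.2) := by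
    rw [Fintype.sum_prod_type]
    simp [dotProduct, Matrix.mulVec, Finset.mul_sum]
    exact Finset.sum_congr rfl fun i _ => Finset.sum_congr rfl fun j _ => by ring
  have h2 : (v ⬝ᵥ (M *ᵥ v)) ^ 2 ≤ (∑ p : Fin d × Fin d, (M p.1 p.2) ^ 2)
      * (∑ p : Fin d × Fin d, (v p.1 * v p.2) ^ 2) := by
    rw [h1]; exact Finset.sum_mul_sq_le_sq_mul_sq _ _ _
  have h3 : (∑ p : Fin d × Fin d, (v p.1 * v p.2) ^ 2) = 1 := by
    rw [Fintype.sum_prod_type]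
    simp_rw [mul_pow, ← Finset.mul_sum, ← Finset.sum_mul, hv]
    simp [hv]
  have h4 : (v ⬝ᵥ (M *ᵥ v)) ^ 2 ≤ frobNorm M ^ 2 := by
    rw [h3, mul_one, Fintype.sum_prod_type] at h2
    rw [frobNorm_sq]
    exact h2
  calc |v ⬝ᵥ (M *ᵥ v)| = Real.sqrt ((v ⬝ᵥ (M *ᵥ v)) ^ 2) := (Real.sqrt_sq_eq_abs _).symm
  _ ≤ Real.sqrt (frobNorm M ^ 2) := Real.sqrt_le_sqrt h4
  _ = frobNorm M := Real.sqrt_sq (frobNorm_nonneg M)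

/-- Any eigenvalue `t` of `√A - √B` satisfies `t² ≤ |A - B|_F`. -/
lemma eig_sq_le {d : ℕ} {A B : Matrix (Fin d) (Fin d) ℝ} (hA : A.PosSemidef) (hB : B.PosSemidef)
    {t : ℝ} {v : Fin d → ℝ} (hv : ∑ j, v j ^ 2 = 1)
    (heig : (psdSqrt A - psdSqrt B) *ᵥ v = t • v) :
    t ^ 2 ≤ frobNorm (A - B) := by
  set P := psdSqrt A with hP
  set Q := psdSqrt B with hQ
  have hPsd : P.PosSemidef := posSemidef_psdSqrt hA
  have hQsd : Q.PosSemidef := posSemidef_psdSqrt hB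
  set S := P - Q with hSdef
  set T := P + Q with hTdef
  have hvv : v ⬝ᵥ v = 1 := by rw [← hv]; simp [dotProduct, sq]
  have hSv : v ⬝ᵥ (S *ᵥ v) = t := by rw [heig, dotProduct_smul, hvv]; simp
  have hPq : 0 ≤ v ⬝ᵥ (P *ᵥ v) := by simpa using hPsd.dotProduct_mulVec_nonneg v
  have hQq : 0 ≤ v ⬝ᵥ (Q *ᵥ v) := by simpa using hQsd.dotProduct_mulVec_nonneg v
  have hTq : v ⬝ᵥ (T *ᵥ v) = v ⬝ᵥ (P *ᵥ v) + v ⬝ᵥ (Q *ᵥ v) := by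
    simp [hTdef, Matrix.add_mulVec, dotProduct_add]
  have hSq : v ⬝ᵥ (S *ᵥ v) = v ⬝ᵥ (P *ᵥ v) - v ⬝ᵥ (Q *ᵥ v) := by
    simp [hSdef, Matrix.sub_mulVec, dotProduct_sub]
  have habs : |t| ≤ v ⬝ᵥ (T *ᵥ v) := by
    rw [abs_le]; constructor
    · rw [← hSv, hSq, hTq]; nlinarith
    · rw [← hSv, hSq, hTq]; nlinarith
  have hSsym : Sᵀ = S := by
    have h1 : Pᵀ = P := hPsd.1
    have h2 : Qᵀ = Q := hQsd.1
    rw [hSdef, Matrix.transpose_sub, h1, h2]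
  have hkey : S * T + T * S = 2 • (A - B) := by
    have h1 : P * P = A := psdSqrt_mul_self hA
    have h2 : Q * Q = B := psdSqrt_mul_self hB
    rw [hSdef, hTdef, ← h1, ← h2]
    noncomm_ring
  have hST : v ⬝ᵥ ((S * T) *ᵥ v) = t * (v ⬝ᵥ (T *ᵥ v)) := by
    rw [← Matrix.mulVec_mulVec]
    rw [Matrix.dotProduct_mulVec v S]
    have : v ᵥ* S = t • v := by
      rw [← hSsym, Matrix.vecMul_transpose, heig]
    rw [this, smul_dotProduct]
    simp [Matrix.dotProduct_mulVec]
  have hTS : v ⬝ᵥ ((T * S) *ᵥ v) = t * (v ⬝ᵥ (T *ᵥ v)) := by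
    rw [← Matrix.mulVec_mulVec, heig, Matrix.mulVec_smul, dotProduct_smul]
    simp
  have hq : v ⬝ᵥ ((A - B) *ᵥ v) = t * (v ⬝ᵥ (T *ᵥ v)) := by
    have := congrArg (fun M => v ⬝ᵥ (M *ᵥ v)) hkey
    simp only [Matrix.add_mulVec, dotProduct_add, hST, hTS] at this
    have h2 : v ⬝ᵥ ((2 • (A - B)) *ᵥ v) = 2 * (v ⬝ᵥ ((A - B) *ᵥ v)) := by
      rw [two_smul, Matrix.add_mulVec, dotProduct_add]; ring
    rw [h2] at this
    linarith
  calc t ^ 2 = |t| * |t| := by rw [← abs_mul, ← sq, abs_of_nonneg (sq_nonneg t)]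
  _ ≤ |t| * (v ⬝ᵥ (T *ᵥ v)) := by
      apply mul_le_mul_of_nonneg_left habs (abs_nonneg t)
  _ = |t * (v ⬝ᵥ (T *ᵥ v))| := by
      rw [abs_mul, abs_of_nonneg (le_trans (abs_nonneg t) habs)]
  _ = |v ⬝ᵥ ((A - B) *ᵥ v)| := by rw [hq]
  _ ≤ frobNorm (A - B) := quad_le_frob _ hv

/-- Pointwise key bound: `|√A - √B|_F⁴ ≤ d² |A - B|_F²`. -/
lemma frob_sqrt_sub_sqrt_le {d : ℕ} {A B : Matrix (Fin d) (Fin d) ℝ}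
    (hA : A.PosSemidef) (hB : B.PosSemidef) :
    frobNorm (psdSqrt A - psdSqrt B) ^ 4 ≤ (d : ℝ) ^ 2 * frobNorm (A - B) ^ 2 := by
  have hsA : psdSqrt A = psdSqrt A := rfl
  have hsB : psdSqrt B = psdSqrt B := rfl
  rw [hsA, hsB]
  set S := psdSqrt A - psdSqrt B with hSdef
  have hS : S.IsHermitian := (posSemidef_psdSqrt hA).1.sub (posSemidef_psdSqrt hB).1
  have heach : ∀ i, hS.eigenvalues i ^ 2 ≤ frobNorm (A - B) := by
    intro i
    set v : Fin d → ℝ := ⇑(hS.eigenvectorBasis i) with hvdef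
    have hnorm : ‖hS.eigenvectorBasis i‖ = 1 := hS.eigenvectorBasis.orthonormal.1 i
    have hv : ∑ j, v j ^ 2 = 1 := by
      have := congrArg (fun r : ℝ => r ^ 2) hnorm
      rw [EuclideanSpace.norm_eq] at this
      simp only [one_pow] at this
      rw [Real.sq_sqrt (Finset.sum_nonneg fun _ _ => sq_nonneg _)] at this
      simpa [hvdef, sq_abs] using this
    exact eig_sq_le hA hB hv (hS.mulVec_eigenvectorBasis i)
  have hsum : frobNorm S ^ 2 ≤ (d : ℝ) * frobNorm (A - B) := by
    rw [frobNorm_sq, sum_sq_eq_sum_eig_sq hS]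
    calc ∑ i, hS.eigenvalues i ^ 2 ≤ ∑ _i : Fin d, frobNorm (A - B) :=
      Finset.sum_le_sum fun i _ => heach i
    _ = (d : ℝ) * frobNorm (A - B) := by simp [mul_comm]
  calc frobNorm S ^ 4 = (frobNorm S ^ 2) ^ 2 := by ring
  _ ≤ ((d : ℝ) * frobNorm (A - B)) ^ 2 := by
      apply pow_le_pow_left₀ (sq_nonneg _) hsum
  _ = (d : ℝ) ^ 2 * frobNorm (A - B) ^ 2 := by ring

end SqrtL4Aux

/-- **L⁴-convergence of square roots along a subsequence (Lemma 3.4 of the paper).**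
On a finite measure space, if a sequence `Cₖ` of a.e. symmetric positive semidefinite
matrix fields converges to `C` in the `L²`-norm (Frobenius norm on matrices), then some
subsequence `C_{k_j}` satisfies `√(C_{k_j}) → √C` in the `L⁴`-norm. -/
theorem sqrt_L4_convergence_of_L2_convergence
    (d : ℕ) (Ω : Type*) [MeasurableSpace Ω] (μ : Measure Ω) [IsFiniteMeasure μ]
    (Cs : ℕ → Ω → Matrix (Fin d) (Fin d) ℝ) (C : Ω → Matrix (Fin d) (Fin d) ℝ)
    (hmeasCs : ∀ k, ∀ i j, Measurable (fun x => Cs k x i j))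
    (hmeasC : ∀ i j, Measurable (fun x => C x i j))
    (hpsdCs : ∀ k, ∀ᵐ x ∂μ, (Cs k x).PosSemidef)
    (hpsdC : ∀ᵐ x ∂μ, (C x).PosSemidef)
    (hconv : Tendsto
      (fun k => ∫⁻ x, ENNReal.ofReal ((frobNorm (Cs k x - C x)) ^ 2) ∂μ)
      atTop (𝓝 0)) :
    ∃ φ : ℕ → ℕ, StrictMono φ ∧
      Tendsto
        (fun j => ∫⁻ x, ENNReal.ofReal ((frobNorm (psdSqrt (Cs (φ j) x) - psdSqrt (C x))) ^ 4) ∂μ)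
        atTop (𝓝 0) := by
  classical
  refine ⟨id, strictMono_id, ?_⟩
  set c : ℝ≥0∞ := ENNReal.ofReal ((d : ℝ) ^ 2) with hc
  have hbound : ∀ k,
      (∫⁻ x, ENNReal.ofReal ((frobNorm (psdSqrt (Cs k x) - psdSqrt (C x))) ^ 4) ∂μ)
        ≤ c * ∫⁻ x, ENNReal.ofReal ((frobNorm (Cs k x - C x)) ^ 2) ∂μ := by
    intro k
    rw [← MeasureTheory.lintegral_const_mul' _ _ (by simp [hc] : c ≠ ∞)]
    refine MeasureTheory.lintegral_mono_ae ?_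
    filter_upwards [hpsdCs k, hpsdC] with x hxk hx
    calc ENNReal.ofReal ((frobNorm (psdSqrt (Cs k x) - psdSqrt (C x))) ^ 4)
        ≤ ENNReal.ofReal ((d : ℝ) ^ 2 * frobNorm (Cs k x - C x) ^ 2) :=
          ENNReal.ofReal_le_ofReal (SqrtL4Aux.frob_sqrt_sub_sqrt_le hxk hx)
    _ = c * ENNReal.ofReal (frobNorm (Cs k x - C x) ^ 2) := by
        rw [hc, ← ENNReal.ofReal_mul (by positivity)]
  have hupper : Tendsto
      (fun k => c * ∫⁻ x, ENNReal.ofReal ((frobNorm (Cs k x - C x)) ^ 2) ∂μ)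
      atTop (𝓝 0) := by
    have := ENNReal.Tendsto.const_mul hconv (Or.inr (by simp [hc] : c ≠ ∞))
    simpa using this
  exact tendsto_of_tendsto_of_tendsto_of_le_of_le tendsto_const_nhds hupper
    (fun k => zero_le) hbound
end

section
/- Let d ≥ 1, c > 0, γ > 1, and let v ∈ ℝᵈ be a nonzero vector. A nonzero real symmetric positive semidefinite d × d matrix C satisfies the stationary equation c² (v ⊗ v) = |C|^(γ−2) · C (where |·| is the Frobenius norm and v ⊗ v is the outer product matrix with entries vᵢ vⱼ) if and only if C = c^(2/(γ−1)) · ‖v‖^(−2(γ−2)/(γ−1)) · (v ⊗ v). In particular, the stationary equation has exactly one nonzero symmetric positive semidefinite solution. -/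
/-- The Euclidean norm of a vector in `ℝᵈ`. -/
noncomputable def euclNorm {d : ℕ} (v : Fin d → ℝ) : ℝ :=
  Real.sqrt (∑ i, (v i) ^ 2)


lemma frobNorm_smul_vvT {d : ℕ} (v : Fin d → ℝ) (a : ℝ) :
    frobNorm (a • Matrix.vecMulVec v v) = |a| * (∑ i, v i ^ 2) := by
  unfold frobNorm
  have h : ∑ i, ∑ j, ((a • Matrix.vecMulVec v v) i j) ^ 2
      = (a * (∑ i, v i ^ 2)) ^ 2 := by
    simp only [Matrix.smul_apply, Matrix.vecMulVec_apply, smul_eq_mul]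
    simp_rw [mul_pow, ← Finset.mul_sum, ← Finset.sum_mul]
    ring
  rw [h, Real.sqrt_sq_eq_abs, abs_mul]
  congr 1
  exact abs_of_nonneg (Finset.sum_nonneg fun i _ => sq_nonneg _)

lemma frobNorm_pos {d : ℕ} {C : Matrix (Fin d) (Fin d) ℝ} (h : C ≠ 0) :
    0 < frobNorm C := by
  unfold frobNorm
  rw [Real.sqrt_pos]
  rcases (Finset.sum_nonneg fun i _ => Finset.sum_nonneg fun j _ =>
      sq_nonneg (C i j)).lt_or_eq with hlt | heq
  · exact hlt
  · exfalso; apply h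
    ext i j
    have h1 := (Finset.sum_eq_zero_iff_of_nonneg
      (fun i _ => Finset.sum_nonneg fun j _ => sq_nonneg (C i j))).1 heq.symm i
      (Finset.mem_univ i)
    have h2 := (Finset.sum_eq_zero_iff_of_nonneg (fun j _ => sq_nonneg (C i j))).1
      h1 j (Finset.mem_univ j)
    simpa using pow_eq_zero_iff (n := 2) (by norm_num) |>.1 h2

lemma log_inj_pos {x y : ℝ} (hx : 0 < x) (hy : 0 < y)
    (h : Real.log x = Real.log y) : x = y := by
  rw [← Real.exp_log hx, ← Real.exp_log hy, h]

/-- **The unique nonzero steady state for the power-law metabolism, `γ > 1`.**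
A nonzero symmetric positive semidefinite matrix `C` satisfies the stationary equation
`c² (v ⊗ v) = |C|^(γ-2) C` (Frobenius norm) if and only if
`C = c^(2/(γ-1)) ‖v‖^(-2(γ-2)/(γ-1)) (v ⊗ v)`. In particular the stationary equation has
exactly one nonzero symmetric positive semidefinite solution. -/
theorem stationary_state_power_law
    (d : ℕ) (hd : 1 ≤ d) (c γ : ℝ) (hc : 0 < c) (hγ : 1 < γ)
    (v : Fin d → ℝ) (hv : v ≠ 0)
    (C : Matrix (Fin d) (Fin d) ℝ) (hC : C.PosSemidef) (hC0 : C ≠ 0) :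
    (c ^ 2 • Matrix.vecMulVec v v = frobNorm C ^ (γ - 2) • C) ↔
      C = (c ^ ((2 : ℝ) / (γ - 1)) * euclNorm v ^ (-(2 * (γ - 2) / (γ - 1)))) •
        Matrix.vecMulVec v v := by
  have hγ1 : γ - 1 ≠ 0 := by linarith
  obtain ⟨i0, hi0⟩ := Function.ne_iff.1 hv
  have hN : 0 < ∑ i, v i ^ 2 :=
    Finset.sum_pos' (fun i _ => sq_nonneg _)
      ⟨i0, Finset.mem_univ i0, lt_of_le_of_ne (sq_nonneg _) (Ne.symm (pow_ne_zero 2 hi0))⟩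
  set N : ℝ := ∑ i, v i ^ 2 with hNdef
  set n : ℝ := euclNorm v with hndef
  have hn : 0 < n := Real.sqrt_pos.2 hN
  have hlogN : Real.log N = 2 * Real.log n := by
    rw [hndef, euclNorm, Real.log_sqrt hN.le]; ring
  set k₀ : ℝ := c ^ ((2 : ℝ) / (γ - 1)) * n ^ (-(2 * (γ - 2) / (γ - 1))) with hk₀def
  have hk₀pos : 0 < k₀ := mul_pos (Real.rpow_pos_of_pos hc _) (Real.rpow_pos_of_pos hn _)
  have hlogk₀ : Real.log k₀ =
      (2 / (γ - 1)) * Real.log c + (-(2 * (γ - 2) / (γ - 1))) * Real.log n := by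
    rw [hk₀def, Real.log_mul (Real.rpow_pos_of_pos hc _).ne' (Real.rpow_pos_of_pos hn _).ne',
      Real.log_rpow hc, Real.log_rpow hn]
  constructor
  · intro h
    have hF : 0 < frobNorm C := frobNorm_pos hC0
    set F : ℝ := frobNorm C with hFdef
    have hFγ : 0 < F ^ (γ - 2) := Real.rpow_pos_of_pos hF _
    set k : ℝ := c ^ 2 * (F ^ (γ - 2))⁻¹ with hkdef
    have hkpos : 0 < k := mul_pos (by positivity) (inv_pos.2 hFγ)
    have hCk : C = k • Matrix.vecMulVec v v := by
      calc C = (F ^ (γ - 2))⁻¹ • (F ^ (γ - 2) • C) := by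
              rw [smul_smul, inv_mul_cancel₀ hFγ.ne', one_smul]
        _ = (F ^ (γ - 2))⁻¹ • (c ^ 2 • Matrix.vecMulVec v v) := by rw [← h]
        _ = k • Matrix.vecMulVec v v := by rw [smul_smul, hkdef, mul_comm]
    have hFN : F = k * N := by
      rw [hFdef, hCk, frobNorm_smul_vvT, abs_of_pos hkpos]
    have e1 : Real.log F = Real.log k + 2 * Real.log n := by
      rw [hFN, Real.log_mul hkpos.ne' hN.ne', hlogN]
    have e2 : Real.log k = 2 * Real.log c - (γ - 2) * Real.log F := by
      rw [hkdef, Real.log_mul (by positivity) (inv_pos.2 hFγ).ne', Real.log_inv,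
        Real.log_rpow hF, Real.log_pow]
      push_cast; ring
    have hLF : Real.log F = (2 * Real.log c + 2 * Real.log n) / (γ - 1) := by
      field_simp
      linarith [e1, e2]
    have hlogk : Real.log k = Real.log k₀ := by
      rw [e2, hLF, hlogk₀]; field_simp; ring
    rw [hCk, log_inj_pos hkpos hk₀pos hlogk]
  · intro h
    have hFC : frobNorm C = k₀ * N := by
      rw [h, frobNorm_smul_vvT, abs_of_pos hk₀pos]
    rw [hFC, h, smul_smul]
    congr 1
    apply log_inj_pos (by positivity) (mul_pos (Real.rpow_pos_of_pos (by positivity) _) hk₀pos)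
    rw [Real.log_mul (Real.rpow_pos_of_pos (by positivity) _).ne' hk₀pos.ne',
      Real.log_rpow (by positivity), Real.log_mul hk₀pos.ne' hN.ne', Real.log_pow,
      hlogN, hlogk₀]
    push_cast; field_simp; ring
end

section
/- Let r > 0 and 0 < γ < 1, define f : (0,∞) → ℝ by f(C) = (r + C)² · C^(γ−1), and set r_γ := (2/(1+γ))² · ((1−γ)/(1+γ))^(γ−1) · r^(γ+1). Let K ≥ 0. Then the equation f(C) = K has: exactly two solutions in (0,∞) if K > r_γ; exactly one solution in (0,∞) if K = r_γ; and no solution in (0,∞) if K < r_γ. -/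
open Real Set Filter Topology

/-- **Number of positive steady states for `0 < γ < 1`.**
For `r > 0`, `0 < γ < 1` and `K ≥ 0`, the equation `(r + C)² C^(γ-1) = K` has exactly
two solutions in `(0, ∞)` if `K > r_γ`, exactly one if `K = r_γ`, and none if `K < r_γ`,
where `r_γ = (2/(1+γ))² ((1-γ)/(1+γ))^(γ-1) r^(γ+1)`. -/
theorem steady_state_count_gamma_lt_one
    (r γ K : ℝ) (hr : 0 < r) (hγ0 : 0 < γ) (hγ1 : γ < 1) (hK : 0 ≤ K)
    (f : ℝ → ℝ) (hf : ∀ C : ℝ, f C = (r + C) ^ 2 * C ^ (γ - 1))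
    (rγ : ℝ) (hrγ : rγ = (2 / (1 + γ)) ^ 2 * ((1 - γ) / (1 + γ)) ^ (γ - 1) * r ^ (γ + 1)) :
    (rγ < K → ∃ C₁ C₂ : ℝ, 0 < C₁ ∧ C₁ < C₂ ∧ f C₁ = K ∧ f C₂ = K ∧
        ∀ C : ℝ, 0 < C → f C = K → C = C₁ ∨ C = C₂) ∧
    (K = rγ → ∃! C : ℝ, 0 < C ∧ f C = K) ∧
    (K < rγ → ¬ ∃ C : ℝ, 0 < C ∧ f C = K) := by
  have h1γ : (0:ℝ) < 1 - γ := by linarith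
  have hγp : (0:ℝ) < 1 + γ := by linarith
  set c : ℝ := r * ((1 - γ) / (1 + γ)) with hc
  have hcpos : 0 < c := by positivity
  -- value at the minimum point
  have hfc : f c = rγ := by
    have hrc : r + c = 2 * r / (1 + γ) := by
      rw [hc]; field_simp; ring
    have hcr : c ^ (γ - 1) = r ^ (γ - 1) * ((1 - γ) / (1 + γ)) ^ (γ - 1) := by
      rw [hc, Real.mul_rpow hr.le (by positivity)]
    have hrr : r ^ (2:ℕ) * r ^ (γ - 1) = r ^ (γ + 1) := by
      rw [← Real.rpow_natCast r 2, ← Real.rpow_add hr]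
      norm_num
      rw [show (2:ℝ)+(γ-1) = γ+1 by ring]
    rw [hf, hrc, hcr, hrγ]
    rw [div_pow, mul_pow, div_pow]
    have : (2:ℝ)^2 * r^2 / (1+γ)^2 * (r ^ (γ-1) * ((1-γ)/(1+γ)) ^ (γ-1))
        = (2:ℝ)^2 / (1+γ)^2 * ((1-γ)/(1+γ)) ^ (γ-1) * (r^2 * r^(γ-1)) := by ring
    rw [this, hrr]
  -- derivative
  have hderiv : ∀ x : ℝ, 0 < x →
      HasDerivAt f ((r + x) * x ^ (γ - 2) * ((1 + γ) * x - (1 - γ) * r)) x := by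
    intro x hx
    have h1 : HasDerivAt (fun C : ℝ => (r + C) ^ 2) (2 * (r + x)) x := by
      have := ((hasDerivAt_id x).const_add r).pow 2
      exact (by simpa using this : HasDerivAt ((fun x => r + x) ^ 2) (2 * (r + x)) x)
    have h2 : HasDerivAt (fun C : ℝ => C ^ (γ - 1)) ((γ - 1) * x ^ (γ - 1 - 1)) x :=
      Real.hasDerivAt_rpow_const (Or.inl hx.ne')
    have h := h1.mul h2
    have hx1 : x ^ (γ - 1) = x ^ (γ - 2) * x := by
      rw [← Real.rpow_add_one hx.ne' (γ - 2)]
      rw [show γ - 2 + 1 = γ - 1 by ring]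
    have hx2 : γ - 1 - 1 = γ - 2 := by ring
    have heq : 2 * (r + x) * x ^ (γ - 1) + (r + x) ^ 2 * ((γ - 1) * x ^ (γ - 1 - 1))
        = (r + x) * x ^ (γ - 2) * ((1 + γ) * x - (1 - γ) * r) := by
      rw [hx1, hx2]; ring
    rw [heq] at h
    have hfeq : (fun C : ℝ => (r + C) ^ 2 * C ^ (γ - 1)) = f := by
      funext C; rw [hf]
    rw [← hfeq]; exact h
  have hcontAt : ∀ x : ℝ, 0 < x → ContinuousAt f x :=
    fun x hx => (hderiv x hx).continuousAt
  -- strict antitone on (0, c]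
  have hanti : StrictAntiOn f (Ioc 0 c) := by
    apply strictAntiOn_of_deriv_neg (convex_Ioc 0 c)
      (fun x hx => (hcontAt x hx.1).continuousWithinAt)
    intro x hx
    rw [interior_Ioc] at hx
    have hx0 : 0 < x := hx.1
    rw [(hderiv x hx0).deriv]
    have h1 : 0 < (r + x) * x ^ (γ - 2) := by positivity
    have h2 : (1 + γ) * x - (1 - γ) * r < 0 := by
      have : (1 + γ) * x < (1 + γ) * c := by
        exact (mul_lt_mul_iff_right₀ hγp).2 hx.2
      have hcc : (1 + γ) * c = (1 - γ) * r := by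
        rw [hc]; field_simp
      linarith
    exact mul_neg_of_pos_of_neg h1 h2
  -- strict monotone on [c, ∞)
  have hmono : StrictMonoOn f (Ici c) := by
    apply strictMonoOn_of_deriv_pos (convex_Ici c)
      (fun x hx => (hcontAt x (lt_of_lt_of_le hcpos hx)).continuousWithinAt)
    intro x hx
    rw [interior_Ici] at hx
    have hx0 : 0 < x := hcpos.trans hx
    rw [(hderiv x hx0).deriv]
    have h1 : 0 < (r + x) * x ^ (γ - 2) := by positivity
    have h2 : 0 < (1 + γ) * x - (1 - γ) * r := by
      have : (1 + γ) * c < (1 + γ) * x := (mul_lt_mul_iff_right₀ hγp).2 hx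
      have hcc : (1 + γ) * c = (1 - γ) * r := by
        rw [hc]; field_simp
      linarith
    exact mul_pos h1 h2
  -- strict minimum
  have hmin : ∀ x : ℝ, 0 < x → x ≠ c → rγ < f x := by
    intro x hx hne
    rcases lt_or_gt_of_ne hne with hlt | hgt
    · have := hanti ⟨hx, hlt.le⟩ ⟨hcpos, le_refl c⟩ hlt
      rwa [hfc] at this
    · have := hmono (le_refl c) hgt.le hgt
      rwa [hfc] at this
  have hge : ∀ x : ℝ, 0 < x → rγ ≤ f x := by
    intro x hx
    rcases eq_or_ne x c with rfl | hne
    · rw [hfc]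
    · exact (hmin x hx hne).le
  -- blow up at 0⁺
  have h0 : Tendsto f (𝓝[>] (0:ℝ)) atTop := by
    have h1 : Tendsto (fun x : ℝ => x ^ (γ - 1)) (𝓝[>] (0:ℝ)) atTop := by
      have hinv : Tendsto (fun x : ℝ => x⁻¹) (𝓝[>] (0:ℝ)) atTop :=
        tendsto_inv_nhdsGT_zero
      have := (tendsto_rpow_atTop h1γ).comp hinv
      apply this.congr'
      filter_upwards [self_mem_nhdsWithin] with x hx
      have hx0 : (0:ℝ) < x := hx
      simp only [Function.comp]
      rw [← Real.rpow_neg_one x, ← Real.rpow_mul hx0.le]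
      congr 1; ring
    have h2 : Tendsto (fun x : ℝ => (r + x) ^ 2) (𝓝[>] (0:ℝ)) (𝓝 (r ^ 2)) := by
      have : Tendsto (fun x : ℝ => (r + x) ^ 2) (𝓝 (0:ℝ)) (𝓝 ((r + 0) ^ 2)) := by
        exact (continuous_const.add continuous_id).pow 2 |>.tendsto 0
      simpa using this.mono_left nhdsWithin_le_nhds
    have h3 := Filter.Tendsto.pos_mul_atTop (show (0:ℝ) < r ^ 2 by positivity) h2 h1
    apply h3.congr
    intro x
    rw [hf]
  -- blow up at ∞
  have hinf : Tendsto f atTop atTop := by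
    have h1 : Tendsto (fun x : ℝ => x ^ (γ + 1)) atTop atTop :=
      tendsto_rpow_atTop (by linarith)
    apply tendsto_atTop_mono' _ _ h1
    filter_upwards [eventually_gt_atTop (0:ℝ)] with x hx
    rw [hf]
    have h2 : x ^ (γ + 1) = x ^ 2 * x ^ (γ - 1) := by
      rw [← Real.rpow_natCast x 2, ← Real.rpow_add hx]
      norm_num
      rw [show (2:ℝ)+(γ-1) = γ+1 by ring]
    rw [h2]
    have : x ^ 2 ≤ (r + x) ^ 2 := by nlinarith
    exact mul_le_mul_of_nonneg_right this (Real.rpow_nonneg hx.le _)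
  refine ⟨?_, ?_, ?_⟩
  · -- two solutions
    intro hKgt
    obtain ⟨a, haf, ha⟩ : ∃ a, K < f a ∧ a ∈ Ioo (0:ℝ) c := by
      have h1 : ∀ᶠ x in 𝓝[>] (0:ℝ), K < f x := h0.eventually_gt_atTop K
      have h2 : Ioo (0:ℝ) c ∈ 𝓝[>] (0:ℝ) :=
        Ioo_mem_nhdsGT_of_mem ⟨le_refl 0, hcpos⟩
      exact (h1.and (eventually_of_mem h2 (fun x hx => hx))).exists
    obtain ⟨b, hbf, hb⟩ : ∃ b, K < f b ∧ c < b := by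
      have h1 : ∀ᶠ x in atTop, K < f x := hinf.eventually_gt_atTop K
      exact (h1.and (eventually_gt_atTop c)).exists
    have hcontIcc1 : ContinuousOn f (Icc a c) := fun x hx =>
      (hcontAt x (lt_of_lt_of_le ha.1 hx.1)).continuousWithinAt
    have hcontIcc2 : ContinuousOn f (Icc c b) := fun x hx =>
      (hcontAt x (lt_of_lt_of_le hcpos hx.1)).continuousWithinAt
    obtain ⟨C₁, hC₁mem, hC₁⟩ : ∃ x ∈ Icc a c, f x = K := by
      have := intermediate_value_Icc' ha.2.le hcontIcc1
      exact this ⟨by rw [hfc]; exact hKgt.le, haf.le⟩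
    obtain ⟨C₂, hC₂mem, hC₂⟩ : ∃ x ∈ Icc c b, f x = K := by
      have := intermediate_value_Icc hb.le hcontIcc2
      exact this ⟨by rw [hfc]; exact hKgt.le, hbf.le⟩
    have hC₁pos : 0 < C₁ := lt_of_lt_of_le ha.1 hC₁mem.1
    have hC₁ne : C₁ ≠ c := fun h => by rw [h, hfc] at hC₁; exact hKgt.ne hC₁
    have hC₁lt : C₁ < c := lt_of_le_of_ne hC₁mem.2 hC₁ne
    have hC₂ne : C₂ ≠ c := fun h => by rw [h, hfc] at hC₂; exact hKgt.ne hC₂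
    have hC₂gt : c < C₂ := lt_of_le_of_ne hC₂mem.1 (Ne.symm hC₂ne)
    refine ⟨C₁, C₂, hC₁pos, hC₁lt.trans hC₂gt, hC₁, hC₂, ?_⟩
    intro C hC hfCK
    rcases le_or_gt C c with hle | hgt
    · left
      exact hanti.injOn ⟨hC, hle⟩ ⟨hC₁pos, hC₁lt.le⟩ (by rw [hfCK, hC₁])
    · right
      exact hmono.injOn hgt.le hC₂gt.le (by rw [hfCK, hC₂])
  · -- one solution
    intro hKeq
    refine ⟨c, ⟨hcpos, by rw [hfc, hKeq]⟩, ?_⟩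
    rintro y ⟨hy, hfy⟩
    by_contra hne
    have := hmin y hy hne
    rw [hfy, hKeq] at this
    exact lt_irrefl _ this
  · -- no solution
    rintro hKlt ⟨C, hC, hfC⟩
    have := hge C hC
    rw [hfC] at this
    linarith
end

section
/- Let r > 0, 0 < γ < 1, and K > r_γ := (2/(1+γ))² · ((1−γ)/(1+γ))^(γ−1) · r^(γ+1). Let C₁ < C₂ be the two solutions in (0,∞) of (r + C)² C^(γ−1) = K, and define g : (0,∞) → ℝ by g(C) = K/(r + C)² − C^(γ−1). Then g(C) < 0 for C ∈ (0, C₁), g(C) > 0 for C ∈ (C₁, C₂), and g(C) < 0 for C ∈ (C₂, ∞). In particular, the steady state C₁ is unstable and C₂ is asymptotically stable for the scalar ODE Ċ = g(C). -/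
/-- **Sign of the right-hand side of the conductance ODE for `0 < γ < 1`, `K > r_γ`.**
Let `C₁ < C₂` be the two positive solutions of `(r + C)² C^(γ-1) = K` and
`g(C) = K/(r + C)² − C^(γ-1)`. Then `g < 0` on `(0, C₁)`, `g > 0` on `(C₁, C₂)` and
`g < 0` on `(C₂, ∞)`; hence `C₁` is unstable and `C₂` is asymptotically stable for the
scalar ODE `Ċ = g(C)`. -/
theorem steady_state_stability_gamma_lt_one
    (r γ K : ℝ) (hr : 0 < r) (hγ0 : 0 < γ) (hγ1 : γ < 1)
    (rγ : ℝ) (hrγ : rγ = (2 / (1 + γ)) ^ 2 * ((1 - γ) / (1 + γ)) ^ (γ - 1) * r ^ (γ + 1))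
    (hK : rγ < K)
    (C₁ C₂ : ℝ) (hC₁ : 0 < C₁) (h12 : C₁ < C₂)
    (hroot₁ : (r + C₁) ^ 2 * C₁ ^ (γ - 1) = K)
    (hroot₂ : (r + C₂) ^ 2 * C₂ ^ (γ - 1) = K)
    (g : ℝ → ℝ) (hg : ∀ C : ℝ, g C = K / (r + C) ^ 2 - C ^ (γ - 1)) :
    (∀ C : ℝ, 0 < C → C < C₁ → g C < 0) ∧
    (∀ C : ℝ, C₁ < C → C < C₂ → 0 < g C) ∧
    (∀ C : ℝ, C₂ < C → g C < 0) := by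
  have hg1 : 0 < 1 + γ := by linarith
  have hg2 : 0 < 1 - γ := by linarith
  set c : ℝ := (1 - γ) * r / (1 + γ) with hc
  have hcpos : 0 < c := div_pos (mul_pos hg2 hr) hg1
  set F : ℝ → ℝ := fun C => (r + C) ^ 2 * C ^ (γ - 1) with hFdef
  have hderiv : ∀ x : ℝ, 0 < x → HasDerivAt F
      (x ^ (γ - 2) * ((r + x) * ((1 + γ) * x - (1 - γ) * r))) x := by
    intro x hx
    have h1 : HasDerivAt (fun C : ℝ => (r + C) ^ 2) (2 * (r + x)) x := by
      simpa using ((hasDerivAt_id x).const_add r).fun_pow 2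
    have h2 : HasDerivAt (fun C : ℝ => C ^ (γ - 1)) ((γ - 1) * x ^ (γ - 2)) x := by
      have := Real.hasDerivAt_rpow_const (p := γ - 1) (Or.inl hx.ne')
      convert this using 2
      ring
    have h := h1.fun_mul h2
    refine h.congr_deriv ?_
    have hx1 : x ^ (γ - 1) = x ^ (γ - 2) * x := by
      rw [show γ - 1 = (γ - 2) + 1 by ring, Real.rpow_add hx, Real.rpow_one]
    rw [hx1]; ring
  have hdsign : ∀ x : ℝ, 0 < x → deriv F x
      = x ^ (γ - 2) * ((r + x) * ((1 + γ) * x - (1 - γ) * r)) := fun x hx => (hderiv x hx).deriv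
  have hmono : StrictMonoOn F (Set.Ici c) := by
    apply strictMonoOn_of_deriv_pos (convex_Ici c)
    · intro x hx
      exact (hderiv x (lt_of_lt_of_le hcpos hx)).continuousAt.continuousWithinAt
    · intro x hx
      rw [interior_Ici] at hx
      have hxpos : 0 < x := hcpos.trans hx
      rw [hdsign x hxpos]
      have hb : 0 < (1 + γ) * x - (1 - γ) * r := by
        have := (div_lt_iff₀ hg1).mp hx
        linarith
      positivity
  have hanti : StrictAntiOn F (Set.Ioc 0 c) := by
    apply strictAntiOn_of_deriv_neg (convex_Ioc 0 c)
    · intro x hx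
      exact (hderiv x hx.1).continuousAt.continuousWithinAt
    · intro x hx
      rw [interior_Ioc] at hx
      have hxpos : 0 < x := hx.1
      rw [hdsign x hxpos]
      have hb : (1 + γ) * x - (1 - γ) * r < 0 := by
        have := (lt_div_iff₀ hg1).mp hx.2
        linarith
      have h1 : (0:ℝ) < x ^ (γ - 2) := Real.rpow_pos_of_pos hxpos _
      have h2 : (0:ℝ) < r + x := by linarith
      exact mul_neg_of_pos_of_neg h1 (mul_neg_of_pos_of_neg h2 hb)
  -- locate c between the roots
  have hC₂pos : 0 < C₂ := hC₁.trans h12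
  have hc2 : c ≤ C₂ := by
    by_contra h
    push_neg at h
    have h2 : F C₂ < F C₁ := hanti ⟨hC₁, by linarith⟩ ⟨hC₂pos, h.le⟩ h12
    have e1 : F C₁ = K := hroot₁
    have e2 : F C₂ = K := hroot₂
    rw [e1, e2] at h2
    exact lt_irrefl _ h2
  have hc1 : C₁ ≤ c := by
    by_contra h
    push_neg at h
    have h2 : F C₁ < F C₂ := hmono h.le (le_of_lt (h.trans h12)) h12
    have e1 : F C₁ = K := hroot₁
    have e2 : F C₂ = K := hroot₂
    rw [e1, e2] at h2
    exact lt_irrefl _ h2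
  -- translation between g and F
  have key_neg : ∀ C : ℝ, 0 < C → K < F C → g C < 0 := by
    intro C hC hKF
    have hrc : (0:ℝ) < (r + C) ^ 2 := by positivity
    rw [hg]
    rw [sub_neg, div_lt_iff₀ hrc]
    calc K < F C := hKF
    _ = C ^ (γ - 1) * (r + C) ^ 2 := by rw [hFdef]; ring
  have key_pos : ∀ C : ℝ, 0 < C → F C < K → 0 < g C := by
    intro C hC hKF
    have hrc : (0:ℝ) < (r + C) ^ 2 := by positivity
    rw [hg]
    rw [sub_pos, lt_div_iff₀ hrc]
    calc C ^ (γ - 1) * (r + C) ^ 2 = F C := by rw [hFdef]; ring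
    _ < K := hKF
  refine ⟨?_, ?_, ?_⟩
  · intro C hC hCC₁
    apply key_neg C hC
    have h2 : F C₁ < F C := hanti ⟨hC, by linarith⟩ ⟨hC₁, hc1⟩ hCC₁
    have e1 : F C₁ = K := hroot₁
    rw [e1] at h2
    exact h2
  · intro C h1C h2C
    have hC : 0 < C := hC₁.trans h1C
    apply key_pos C hC
    rcases le_or_gt C c with hle | hlt
    · have h2 : F C < F C₁ := hanti ⟨hC₁, hc1⟩ ⟨hC, hle⟩ h1C
      have e1 : F C₁ = K := hroot₁
      rw [e1] at h2
      exact h2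
    · have h2 : F C < F C₂ := hmono hlt.le hc2 h2C
      have e2 : F C₂ = K := hroot₂
      rw [e2] at h2
      exact h2
  · intro C hC₂C
    have hC : 0 < C := hC₂pos.trans hC₂C
    apply key_neg C hC
    have h2 : F C₂ < F C := hmono hc2 (hc2.trans hC₂C.le) hC₂C
    have e2 : F C₂ = K := hroot₂
    rw [e2] at h2
    exact h2
end

section
/- Let r > 0, 0 < γ < 1, and 0 ≤ K < r_γ := (2/(1+γ))² · ((1−γ)/(1+γ))^(γ−1) · r^(γ+1), and define g : (0,∞) → ℝ by g(C) = K/(r + C)² − C^(γ−1). Then for every C₀ > 0 there exists ε > 0 such that g(C) ≤ −ε for all C ∈ (0, C₀], and consequently there exists T* > 0 (one may take T* = C₀/ε) such that there is no differentiable function u : [0, T*] → ℝ with u(0) = C₀, u(t) > 0 for all t ∈ [0, T*], and u'(t) = g(u(t)) for all t ∈ [0, T*]. In other words, every solution of Ċ = g(C) starting from a positive initial value reaches zero in finite time. -/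
open Real

lemma key_min (r γ : ℝ) (hr : 0 < r) (hγ0 : 0 < γ) (hγ1 : γ < 1)
    (rγ : ℝ) (hrγ : rγ = (2 / (1 + γ)) ^ 2 * ((1 - γ) / (1 + γ)) ^ (γ - 1) * r ^ (γ + 1))
    (C : ℝ) (hC : 0 < C) : rγ ≤ (r + C) ^ 2 * C ^ (γ - 1) := by
  have h1γ : (0:ℝ) < 1 + γ := by linarith
  have h1γ' : (0:ℝ) < 1 - γ := by linarith
  set s : ℝ := (1 - γ) / 2 with hs_def
  have hs : 0 < s := by positivity
  have h1s : 1 - s = (1 + γ) / 2 := by rw [hs_def]; ring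
  have h1s0 : 0 < 1 - s := by linarith
  have hamgm : (C / s) ^ s * (r / (1 - s)) ^ (1 - s) ≤ s * (C / s) + (1 - s) * (r / (1 - s)) :=
    Real.geom_mean_le_arith_mean2_weighted hs.le h1s0.le (by positivity) (by positivity) (by ring)
  have hsum : s * (C / s) + (1 - s) * (r / (1 - s)) = r + C := by
    field_simp; ring
  rw [hsum] at hamgm
  have hA : (0:ℝ) ≤ (C / s) ^ s * (r / (1 - s)) ^ (1 - s) := by positivity
  have hsq : ((C / s) ^ s * (r / (1 - s)) ^ (1 - s)) ^ 2 ≤ (r + C) ^ 2 :=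
    pow_le_pow_left₀ hA hamgm 2
  have hsq' : ((C / s) ^ s * (r / (1 - s)) ^ (1 - s)) ^ 2
      = (C / s) ^ (2 * s) * (r / (1 - s)) ^ (2 * (1 - s)) := by
    rw [mul_pow, sq, sq, ← Real.rpow_add (by positivity), ← Real.rpow_add (by positivity)]
    ring_nf
  rw [hsq'] at hsq
  have h2s : 2 * s = 1 - γ := by rw [hs_def]; ring
  have h2s' : 2 * (1 - s) = 1 + γ := by rw [hs_def]; ring
  rw [h2s, h2s'] at hsq
  have hCp : (0:ℝ) < C ^ (γ - 1) := Real.rpow_pos_of_pos hC _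
  have hmul : (C / s) ^ (1 - γ) * (r / (1 - s)) ^ (1 + γ) * C ^ (γ - 1)
      ≤ (r + C) ^ 2 * C ^ (γ - 1) :=
    mul_le_mul_of_nonneg_right hsq hCp.le
  have hleft : (C / s) ^ (1 - γ) * (r / (1 - s)) ^ (1 + γ) * C ^ (γ - 1)
      = s ^ (γ - 1) * (r / (1 - s)) ^ (1 + γ) := by
    rw [Real.div_rpow hC.le hs.le]
    rw [mul_comm (C ^ (1 - γ) / s ^ (1 - γ)) _, mul_assoc, div_mul_eq_mul_div,
      ← Real.rpow_add hC]
    norm_num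
    rw [show γ - 1 = -(1 - γ) by ring, Real.rpow_neg hs.le]
    ring
  rw [hleft] at hmul
  -- identify rγ with the constant
  set a : ℝ := 2 / (1 + γ) with ha_def
  set b : ℝ := (1 - γ) / (1 + γ) with hb_def
  have ha : 0 < a := by positivity
  have hb : 0 < b := by positivity
  have e1 : s = b / a := by rw [hs_def, hb_def, ha_def]; field_simp
  have e2 : r / (1 - s) = a * r := by rw [h1s, ha_def]; field_simp
  have hreq : rγ = s ^ (γ - 1) * (r / (1 - s)) ^ (1 + γ) := by
    rw [e2, e1, Real.div_rpow hb.le ha.le, Real.mul_rpow ha.le hr.le]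
    have : b ^ (γ - 1) / a ^ (γ - 1) * (a ^ (1 + γ) * r ^ (1 + γ))
        = b ^ (γ - 1) * (a ^ (1 + γ) / a ^ (γ - 1)) * r ^ (1 + γ) := by ring
    rw [this, ← Real.rpow_sub ha,
      show (1:ℝ) + γ - (γ - 1) = ((2:ℕ):ℝ) by push_cast; ring, Real.rpow_natCast,
      show (1:ℝ) + γ = γ + 1 by ring, hrγ]
    ring
  linarith


/-- **Finite-time extinction for `0 < γ < 1` and `K < r_γ`.**
With `g(C) = K/(r + C)² − C^(γ-1)`, for every `C₀ > 0` there is `ε > 0` with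
`g(C) ≤ −ε` on `(0, C₀]`, and consequently some `T* > 0` such that no positive
differentiable solution of `Ċ = g(C)` starting at `C₀` exists on `[0, T*]`: every
solution starting from a positive initial value reaches zero in finite time. -/
theorem finite_time_extinction_gamma_lt_one
    (r γ K : ℝ) (hr : 0 < r) (hγ0 : 0 < γ) (hγ1 : γ < 1)
    (rγ : ℝ) (hrγ : rγ = (2 / (1 + γ)) ^ 2 * ((1 - γ) / (1 + γ)) ^ (γ - 1) * r ^ (γ + 1))
    (hK0 : 0 ≤ K) (hK : K < rγ)
    (g : ℝ → ℝ) (hg : ∀ C : ℝ, g C = K / (r + C) ^ 2 - C ^ (γ - 1)) :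
    ∀ C₀ : ℝ, 0 < C₀ → ∃ ε : ℝ, 0 < ε ∧
      (∀ C : ℝ, 0 < C → C ≤ C₀ → g C ≤ -ε) ∧
      ∃ T : ℝ, 0 < T ∧
        ¬ ∃ u : ℝ → ℝ, u 0 = C₀ ∧
          (∀ t ∈ Set.Icc (0 : ℝ) T, 0 < u t) ∧
          (∀ t ∈ Set.Icc (0 : ℝ) T, HasDerivWithinAt u (g (u t)) (Set.Icc 0 T) t) := by
  intro C₀ hC₀
  have hKrγ : 0 < rγ - K := by linarith
  set ε : ℝ := (rγ - K) / (r + C₀) ^ 2 with hε_def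
  have hden₀ : (0:ℝ) < (r + C₀) ^ 2 := by positivity
  have hε : 0 < ε := by positivity
  -- the pointwise bound on (0, C₀]
  have hbound : ∀ C : ℝ, 0 < C → C ≤ C₀ → g C ≤ -ε := by
    intro C hC hCle
    have hden : (0:ℝ) < (r + C) ^ 2 := by positivity
    have hkey := key_min r γ hr hγ0 hγ1 rγ hrγ C hC
    have h2 : rγ / (r + C) ^ 2 ≤ C ^ (γ - 1) := by
      rw [div_le_iff₀ hden]; linarith [mul_comm ((r + C) ^ 2) (C ^ (γ - 1))]
    have h1 : g C ≤ (K - rγ) / (r + C) ^ 2 := by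
      rw [hg C, sub_div]; linarith
    have hsq : (r + C) ^ 2 ≤ (r + C₀) ^ 2 := by nlinarith
    have h3 : (K - rγ) / (r + C) ^ 2 ≤ (K - rγ) / (r + C₀) ^ 2 := by
      rw [div_le_div_iff₀ hden hden₀]
      nlinarith [mul_nonneg hKrγ.le (sub_nonneg.2 hsq)]
    have h4 : (K - rγ) / (r + C₀) ^ 2 = -ε := by
      rw [hε_def]; ring
    linarith
  -- g is nonpositive on all of (0, ∞)
  have hgnonpos : ∀ C : ℝ, 0 < C → g C ≤ 0 := by
    intro C hC
    have hden : (0:ℝ) < (r + C) ^ 2 := by positivity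
    have hkey := key_min r γ hr hγ0 hγ1 rγ hrγ C hC
    have h2 : rγ / (r + C) ^ 2 ≤ C ^ (γ - 1) := by
      rw [div_le_iff₀ hden]; linarith [mul_comm ((r + C) ^ 2) (C ^ (γ - 1))]
    rw [hg C]
    have : K / (r + C) ^ 2 ≤ rγ / (r + C) ^ 2 := (div_le_div_iff_of_pos_right hden).2 hK.le
    linarith
  refine ⟨ε, hε, hbound, C₀ / ε, by positivity, ?_⟩
  rintro ⟨u, hu0, hupos, huderiv⟩
  set T : ℝ := C₀ / ε with hT_def
  have hT0 : 0 < T := by positivity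
  have h0mem : (0:ℝ) ∈ Set.Icc (0:ℝ) T := ⟨le_refl 0, hT0.le⟩
  have hTmem : T ∈ Set.Icc (0:ℝ) T := ⟨hT0.le, le_refl T⟩
  have hIcc : Convex ℝ (Set.Icc (0:ℝ) T) := convex_Icc 0 T
  have hucont : ContinuousOn u (Set.Icc (0:ℝ) T) :=
    fun t ht => (huderiv t ht).continuousWithinAt
  -- u is antitone
  have huanti : AntitoneOn u (Set.Icc (0:ℝ) T) := by
    refine antitoneOn_of_hasDerivWithinAt_nonpos hIcc hucont
      (f' := fun t => g (u t)) (fun x hx => ?_) (fun x hx => ?_)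
    · exact ((huderiv x (interior_subset hx)).mono interior_subset)
    · exact hgnonpos (u x) (hupos x (interior_subset hx))
  have hule : ∀ t ∈ Set.Icc (0:ℝ) T, u t ≤ C₀ := by
    intro t ht
    have := huanti h0mem ht ht.1
    rwa [hu0] at this
  -- v t = u t + ε t is antitone
  have hvanti : AntitoneOn (fun t => u t + ε * t) (Set.Icc (0:ℝ) T) := by
    refine antitoneOn_of_hasDerivWithinAt_nonpos hIcc ?_
      (f' := fun t => g (u t) + ε) (fun x hx => ?_) (fun x hx => ?_)
    · exact hucont.add (continuous_const.mul continuous_id).continuousOn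
    · have h1 : HasDerivWithinAt (fun t : ℝ => ε * t) ε (Set.Icc 0 T) x := by
        simpa using ((hasDerivAt_id x).const_mul ε).hasDerivWithinAt
      exact (((huderiv x (interior_subset hx)).add h1).mono interior_subset)
    · have hx' := interior_subset hx
      have := hbound (u x) (hupos x hx') (hule x hx')
      show g (u x) + ε ≤ 0
      linarith
  have hfin := hvanti h0mem hTmem hT0.le
  simp only [mul_zero, add_zero, hu0] at hfin
  have hεT : ε * T = C₀ := by
    rw [hT_def]; field_simp
  have : u T ≤ 0 := by linarith
  exact absurd (hupos T hTmem) (not_lt.2 this)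
end
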